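/- arXiv:2202.13015 — 5 statements merged into one kernel-verified Lean document; each statement's English description precedes it below -/
import Mathlib

section
/- Every tree that is not a caterpillar contains a subtree isomorphic to the spider Y: a root with three children, each of which has exactly one child (i.e., the tree obtained by subdividing every edge of the star K_{1,3} once). -/
/-!
Take a longest path `P` in `T`. As `T` is not a caterpillar, some vertex `v` is at distance
at least two from `P`; the path from `P` to `v` leaves `P` at a single vertex `c` and has length
at least two. If one of the two pieces of `P` on either side of `c` were shorter than it, swapping
that piece for the path to `v` would give a longer path. So `c` has three internally disjoint paths
of length at least two, and their first two steps form a `Y`.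
-/

open SimpleGraph

/-- Clockwise distance from position `x` to position `v` in the cyclic order `ZMod n`. -/
def relpos {n : ℕ} (x v : ZMod n) : ℕ := (v - x).val

/-- `(v, v+1)` is a candidate gap for the non-edge `{x,y}` (arc taken clockwise from
`x` to `y`): the consecutive vertices `v, v+1` are non-adjacent, `[v, v+1] ⊆ [x, y]`,
and no edge of `G` joins a vertex of `[x, v]` to a vertex of `[v+1, y]`. -/
def CandidateGap {n : ℕ} (G : SimpleGraph (ZMod n)) (x y v : ZMod n) : Prop :=
  ¬ G.Adj v (v + 1) ∧
  relpos x v < relpos x (v + 1) ∧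
  relpos x (v + 1) ≤ relpos x y ∧
  ∀ u w : ZMod n, relpos x u ≤ relpos x v → relpos (v + 1) w ≤ relpos (v + 1) y →
    ¬ G.Adj u w

/-- The gap condition: every non-edge has a candidate gap (on one of its two arcs). -/
def GapCondition {n : ℕ} (G : SimpleGraph (ZMod n)) : Prop :=
  ∀ x y : ZMod n, x ≠ y → ¬ G.Adj x y →
    ∃ v : ZMod n, CandidateGap G x y v ∨ CandidateGap G y x v

/-- Vertex `v` has the consecutive-neighbors property: its neighbors occupy
circularly consecutive positions `a, a+1, …, a+k-1`. -/
def CNP {n : ℕ} (G : SimpleGraph (ZMod n)) (v : ZMod n) : Prop :=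
  ∃ (a : ZMod n) (k : ℕ), ∀ w : ZMod n,
    G.Adj v w ↔ ∃ i : ℕ, i < k ∧ w = a + (i : ZMod n)

/-- A caterpillar: a tree in which every vertex is within distance 1 of a central path. -/
def IsCaterpillar {V : Type*} (G : SimpleGraph V) : Prop :=
  G.IsTree ∧ ∃ (a b : V) (p : G.Walk a b), p.IsPath ∧
    ∀ v : V, v ∈ p.support ∨ ∃ u ∈ p.support, G.Adj v u

/-- The spider `Y`: center `0` adjacent to `1,2,3`, which have pendant children `4,5,6`. -/
def spiderY : SimpleGraph (Fin 7) :=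
  SimpleGraph.fromEdgeSet {s(0,1), s(0,2), s(0,3), s(1,4), s(2,5), s(3,6)}

namespace SimpleGraph

variable {V : Type*} {G : SimpleGraph V}

namespace Walk

theorem IsPath.append {u v w : V} {p : G.Walk u v} {q : G.Walk v w} (hp : p.IsPath)
    (hq : q.IsPath) (hpq : ∀ x ∈ p.support, x ∈ q.support → x = v) : (p.append q).IsPath := by
  rw [isPath_def, support_append]
  refine hp.support_nodup.append hq.support_nodup.tail fun x hxp hxq => ?_
  obtain rfl := hpq x hxp (List.mem_of_mem_tail hxq)
  have hnodup := hq.support_nodup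
  rw [← cons_tail_support, List.nodup_cons] at hnodup
  exact hnodup.1 hxq

theorem two_le_length_of_ne_of_not_adj {u v : V} (p : G.Walk u v) (hne : u ≠ v)
    (hadj : ¬ G.Adj u v) : 2 ≤ p.length := by
  by_contra! hp
  interval_cases hl : p.length
  · exact hne (eq_of_length_eq_zero hl)
  · exact hadj (adj_of_length_eq_one hl)

theorem exists_walk_to_first_mem {S : Set V} {v u : V} (q : G.Walk v u) (hu : u ∈ S) :
    ∃ c ∈ S, ∃ r : G.Walk v c, ∀ x ∈ r.support, x ∈ S → x = c := by
  induction q with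
  | nil => exact ⟨_, hu, nil, by simp⟩
  | @cons v w _ h q ih =>
    by_cases hv : v ∈ S
    · exact ⟨v, hv, nil, by simp⟩
    obtain ⟨c, hc, r, hr⟩ := ih hu
    refine ⟨c, hc, cons h r, fun x hx hxS => ?_⟩
    rw [support_cons, List.mem_cons] at hx
    obtain rfl | hx := hx
    exacts [absurd hxS hv, hr x hx hxS]

theorem IsPath.eq_of_mem_takeUntil_of_mem_dropUntil [DecidableEq V] {u v c x : V}
    {p : G.Walk u v} (hp : p.IsPath) (hc : c ∈ p.support) (hx₁ : x ∈ (p.takeUntil c hc).support)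
    (hx₂ : x ∈ (p.dropUntil c hc).support) : x = c := by
  by_contra hxc
  rw [← p.take_spec hc] at hp
  exact hp.ne_of_mem_support_of_append hxc hx₁ hx₂ rfl

def IsLongestPath {u v : V} (p : G.Walk u v) : Prop :=
  p.IsPath ∧ ∀ (a b : V) (q : G.Walk a b), q.IsPath → q.length ≤ p.length

theorem IsLongestPath.length_le_takeUntil_and_dropUntil [DecidableEq V] {u v w c : V}
    {p : G.Walk u v} (hp : p.IsLongestPath) (hc : c ∈ p.support) {r : G.Walk c w} (hr : r.IsPath)
    (hrp : ∀ x ∈ p.support, x ∈ r.support → x = c) :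
    r.length ≤ (p.takeUntil c hc).length ∧ r.length ≤ (p.dropUntil c hc).length := by
  have extend : ∀ {a} (q : G.Walk a c), q.IsPath → q.support ⊆ p.support →
      q.length + r.length ≤ p.length := fun q hq hqp => by
    simpa using hp.2 _ _ _ (hq.append hr fun x hx => hrp x (hqp hx))
  have hsum : (p.takeUntil c hc).length + (p.dropUntil c hc).length = p.length := by
    rw [← length_append, take_spec]
  have htake := extend _ (hp.1.takeUntil hc) (p.support_takeUntil_subset_support hc)
  have hdrop := extend _ (hp.1.dropUntil hc).reverse fun x hx =>
    p.support_dropUntil_subset_support hc (by simpa using hx)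
  rw [length_reverse] at hdrop
  omega

end Walk

open Walk

theorem exists_isLongestPath [Fintype V] [Nonempty V] (G : SimpleGraph V) :
    ∃ (a b : V) (p : G.Walk a b), p.IsLongestPath := by
  let lengths := {n | ∃ (a b : V) (p : G.Walk a b), p.IsPath ∧ p.length = n}
  have hne : lengths.Nonempty := ⟨0, Classical.arbitrary V, _, nil, IsPath.nil, rfl⟩
  have hbdd : BddAbove lengths :=
    ⟨Fintype.card V, by rintro _ ⟨a, b, p, hp, rfl⟩; exact hp.length_lt.le⟩
  obtain ⟨a, b, p, hp, hlen⟩ := Nat.sSup_mem hne hbdd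
  exact ⟨a, b, p, hp, fun c d q hq => hlen ▸ le_csSup hbdd ⟨c, d, q, hq, rfl⟩⟩

theorem Connected.exists_isPath_from_first_mem (hG : G.Connected) {S : Set V} {a : V}
    (ha : a ∈ S) (v : V) :
    ∃ c ∈ S, ∃ r : G.Walk c v, r.IsPath ∧ ∀ x ∈ S, x ∈ r.support → x = c := by
  classical
  obtain ⟨q⟩ := hG v a
  obtain ⟨c, hc, r, hr⟩ := q.exists_walk_to_first_mem ha
  refine ⟨c, hc, r.bypass.reverse, r.bypass_isPath.reverse, fun x hxS hx => ?_⟩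
  rw [support_reverse, List.mem_reverse] at hx
  exact hr x (r.support_bypass_subset_support hx) hxS

theorem exists_spiderY_copy {c : V} {x y : Fin 3 → V} {S : Fin 3 → Set V}
    (hcx : ∀ k, G.Adj c (x k)) (hxy : ∀ k, G.Adj (x k) (y k)) (hne : ∀ k, x k ≠ y k)
    (hx : ∀ k, x k ∈ S k) (hy : ∀ k, y k ∈ S k) (hc : ∀ k, c ∉ S k)
    (hS : Pairwise fun k l => Disjoint (S k) (S l)) :
    ∃ f : Fin 7 ↪ V, ∀ i j, spiderY.Adj i j → G.Adj (f i) (f j) := by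
  have hsame : ∀ {k l u}, u ∈ S k → u ∈ S l → k = l := fun hk hl =>
    by_contra fun h => Set.disjoint_left.mp (hS h) hk hl
  have hinj : Function.Injective (Fin.cons c (Fin.append x y) : Fin 7 → V) := by
    refine Fin.cons_injective_of_injective ?_ (Fin.append_injective_iff.mpr ⟨?_, ?_, ?_⟩)
    · rintro ⟨i, hi⟩
      revert hi
      refine Fin.addCases (m := 3) (n := 3) (fun k hk => hc k ?_) (fun k hk => hc k ?_) i
      · rw [← hk, Fin.append_left]; exact hx k
      · rw [← hk, Fin.append_right]; exact hy k
    · exact fun k l h => hsame (hx k) (h ▸ hx l)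
    · exact fun k l h => hsame (hy k) (h ▸ hy l)
    · intro k l h
      obtain rfl := hsame (hx k) (h ▸ hy l)
      exact hne k h
  -- vertex `0` goes to `c`, vertices `k + 1` and `k + 4` to `x k` and `y k`
  refine ⟨⟨_, hinj⟩, fun i j h => ?_⟩
  rw [spiderY, fromEdgeSet_adj] at h
  simp only [Set.mem_insert_iff, Set.mem_singleton_iff, Sym2.eq_iff] at h
  obtain ⟨(⟨rfl, rfl⟩ | ⟨rfl, rfl⟩) | (⟨rfl, rfl⟩ | ⟨rfl, rfl⟩) | (⟨rfl, rfl⟩ | ⟨rfl, rfl⟩) |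
    (⟨rfl, rfl⟩ | ⟨rfl, rfl⟩) | (⟨rfl, rfl⟩ | ⟨rfl, rfl⟩) | ⟨rfl, rfl⟩ | ⟨rfl, rfl⟩, -⟩ := h
  all_goals first | exact hcx _ | exact (hcx _).symm | exact hxy _ | exact (hxy _).symm

theorem exists_spiderY_copy_of_isPath {c u₁ u₂ u₃ : V} {P₁ : G.Walk c u₁} {P₂ : G.Walk c u₂}
    {P₃ : G.Walk c u₃} (hP₁ : P₁.IsPath) (hP₂ : P₂.IsPath) (hP₃ : P₃.IsPath)
    (hl₁ : 2 ≤ P₁.length) (hl₂ : 2 ≤ P₂.length) (hl₃ : 2 ≤ P₃.length)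
    (h₁₂ : ∀ x ∈ P₁.support, x ∈ P₂.support → x = c)
    (h₁₃ : ∀ x ∈ P₁.support, x ∈ P₃.support → x = c)
    (h₂₃ : ∀ x ∈ P₂.support, x ∈ P₃.support → x = c) :
    ∃ f : Fin 7 ↪ V, ∀ i j, spiderY.Adj i j → G.Adj (f i) (f j) := by
  have leg : ∀ {u} {P : G.Walk c u}, P.IsPath → 2 ≤ P.length →
      G.Adj c (P.getVert 1) ∧ G.Adj (P.getVert 1) (P.getVert 2) ∧
        P.getVert 1 ≠ P.getVert 2 ∧ P.getVert 1 ≠ c ∧ P.getVert 2 ≠ c := fun {_ P} hP hl =>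
    ⟨by simpa using P.adj_getVert_succ (i := 0) (by omega), P.adj_getVert_succ (by omega),
      fun h => by simpa using hP.getVert_injOn (by simp; omega) (by simp; omega) h,
      (hP.getVert_eq_start_iff (by omega)).not.mpr one_ne_zero,
      (hP.getVert_eq_start_iff hl).not.mpr two_ne_zero⟩
  have disj : ∀ {u w} {P : G.Walk c u} {Q : G.Walk c w},
      (∀ x ∈ P.support, x ∈ Q.support → x = c) →
        Disjoint {z | z ∈ P.support ∧ z ≠ c} {z | z ∈ Q.support ∧ z ≠ c} := fun h =>
    Set.disjoint_left.mpr fun z hz hz' => hz.2 (h z hz.1 hz'.1)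
  obtain ⟨a₁, b₁, n₁, x₁, y₁⟩ := leg hP₁ hl₁
  obtain ⟨a₂, b₂, n₂, x₂, y₂⟩ := leg hP₂ hl₂
  obtain ⟨a₃, b₃, n₃, x₃, y₃⟩ := leg hP₃ hl₃
  refine exists_spiderY_copy (c := c) (x := ![P₁.getVert 1, P₂.getVert 1, P₃.getVert 1])
    (y := ![P₁.getVert 2, P₂.getVert 2, P₃.getVert 2])
    (S := ![{z | z ∈ P₁.support ∧ z ≠ c}, {z | z ∈ P₂.support ∧ z ≠ c},
      {z | z ∈ P₃.support ∧ z ≠ c}]) ?_ ?_ ?_ ?_ ?_ ?_ ?_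
  · intro k; fin_cases k <;> assumption
  · intro k; fin_cases k <;> assumption
  · intro k; fin_cases k <;> assumption
  · intro k; fin_cases k <;> exact ⟨getVert_mem_support _ _, by assumption⟩
  · intro k; fin_cases k <;> exact ⟨getVert_mem_support _ _, by assumption⟩
  · intro k; fin_cases k <;> exact fun h => h.2 rfl
  · intro k l hkl
    fin_cases k <;> fin_cases l
    all_goals first | exact absurd rfl hkl | exact disj ‹_› | exact (disj ‹_›).symm

end SimpleGraph

open Walk in
/-- Every tree that is not a caterpillar contains a subtree isomorphic to the spider `Y`. -/
theorem stmt_0 {V : Type*} [Fintype V] (T : SimpleGraph V)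
    (hT : T.IsTree) (hC : ¬ IsCaterpillar T) :
    ∃ f : Fin 7 ↪ V, ∀ i j : Fin 7, spiderY.Adj i j → T.Adj (f i) (f j) := by
  classical
  have : Nonempty V := hT.connected.nonempty
  obtain ⟨a, b, p, hp⟩ := T.exists_isLongestPath
  obtain ⟨v, hvp, hvadj⟩ : ∃ v, v ∉ p.support ∧ ∀ u ∈ p.support, ¬ T.Adj u v := by
    by_contra! h
    refine hC ⟨hT, a, b, p, hp.1, fun v => or_iff_not_imp_left.mpr fun hv => ?_⟩
    obtain ⟨u, hu, huv⟩ := h v hv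
    exact ⟨u, hu, huv.symm⟩
  obtain ⟨c, hc, r, hr, hrp⟩ :=
    hT.connected.exists_isPath_from_first_mem (S := {w | w ∈ p.support}) p.start_mem_support v
  have hr₂ : 2 ≤ r.length := r.two_le_length_of_ne_of_not_adj (fun h => hvp (h ▸ hc)) (hvadj c hc)
  obtain ⟨htake, hdrop⟩ := hp.length_le_takeUntil_and_dropUntil hc hr hrp
  refine exists_spiderY_copy_of_isPath (hp.1.takeUntil hc).reverse (hp.1.dropUntil hc) hr
    (by rw [length_reverse]; omega) (by omega) hr₂ (fun x hx₁ hx₂ => ?_) (fun x hx hxr => ?_)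
    (fun x hx => hrp x (p.support_dropUntil_subset_support hc hx))
  · rw [support_reverse, List.mem_reverse] at hx₁
    exact hp.1.eq_of_mem_takeUntil_of_mem_dropUntil hc hx₁ hx₂
  · rw [support_reverse, List.mem_reverse] at hx
    exact hrp x (p.support_takeUntil_subset_support hc hx) hxr
end

section
/- If a graph G admits a circular vertex order in which the neighbors of every vertex form a circularly consecutive interval, then for every non-edge {x,y} of G there exists a 'candidate gap': two circularly consecutive vertices v, v' that are non-adjacent in G, lying (inclusively) between x and y in one of the two arcs, such that no edge of G joins a vertex in the arc [x,v] to a vertex in the arc [v',y]. -/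
open SimpleGraph

section helpers

variable {n : ℕ} [NeZero n]

lemma relpos_lt (x v : ZMod n) : relpos x v < n := ZMod.val_lt _

lemma relpos_self (x : ZMod n) : relpos x x = 0 := by simp [relpos]

lemma relpos_eq_zero_iff {x v : ZMod n} : relpos x v = 0 ↔ v = x := by
  simp [relpos, ZMod.val_eq_zero, sub_eq_zero]

lemma zmod_val_sub_one {z : ZMod n} (h : z ≠ 0) : (z - 1).val = z.val - 1 := by
  have h1 : 1 ≤ z.val := Nat.one_le_iff_ne_zero.mpr (by simpa [ZMod.val_eq_zero] using h)
  have h2 : z.val - 1 < n := by have := ZMod.val_lt z; omega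
  have e : (z - 1) = ((z.val - 1 : ℕ) : ZMod n) := by
    have : ((z.val - 1 : ℕ) : ZMod n) = (z.val : ZMod n) - 1 := by
      push_cast [h1]; ring
    rw [this, ZMod.natCast_zmod_val]
  rw [e, ZMod.val_cast_of_lt h2]

lemma relpos_sub_one {x v : ZMod n} (h : v ≠ x) :
    relpos x (v - 1) = relpos x v - 1 := by
  have : v - 1 - x = v - x - 1 := by ring
  unfold relpos
  rw [this, zmod_val_sub_one (sub_ne_zero.mpr h)]

lemma relpos_base_succ {x w : ZMod n} (h : w ≠ x) :
    relpos (x + 1) w = relpos x w - 1 := by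
  have : w - (x + 1) = w - x - 1 := by ring
  unfold relpos
  rw [this, zmod_val_sub_one (sub_ne_zero.mpr h)]

lemma relpos_pos {x v : ZMod n} (h : v ≠ x) : 1 ≤ relpos x v := by
  have : relpos x v ≠ 0 := fun hh => h (relpos_eq_zero_iff.mp hh)
  omega

lemma relpos_add_one (hn : 1 < n) (x : ZMod n) : relpos x (x + 1) = 1 := by
  have : x + 1 - x = 1 := by ring
  unfold relpos
  rw [this]
  exact ZMod.val_one_eq_one_mod n ▸ Nat.mod_eq_of_lt hn

lemma relpos_right_inj {x v w : ZMod n} (h : relpos x v = relpos x w) : v = w := by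
  have := ZMod.val_injective n h
  have h2 : v - x + x = w - x + x := by rw [this]
  simpa using h2

lemma relpos_symm {x y : ZMod n} (h : x ≠ y) : relpos y x = n - relpos x y := by
  unfold relpos
  have : x - y = -(y - x) := by ring
  rw [this, ZMod.neg_val]
  simp [sub_eq_zero, h.symm]

lemma relpos_trans (x y u : ZMod n) :
    relpos x u = (relpos x y + relpos y u) % n := by
  unfold relpos
  have : u - x = (y - x) + (u - y) := by ring
  rw [this, ZMod.val_add]

lemma relpos_add_nat (x a : ZMod n) (i : ℕ) :
    relpos x (a + (i : ZMod n)) = (relpos x a + i) % n := by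
  unfold relpos
  have : a + (i : ZMod n) - x = (a - x) + (i : ZMod n) := by ring
  rw [this, ZMod.val_add, ZMod.val_natCast, Nat.add_mod_mod]

lemma cross_of_not_gap (H : SimpleGraph (ZMod n)) {x y v : ZMod n}
    (h : ¬ CandidateGap H x y v)
    (h1 : relpos x v < relpos x (v + 1)) (h2 : relpos x (v + 1) ≤ relpos x y) :
    ∃ u w, relpos x u ≤ relpos x v ∧ relpos (v + 1) w ≤ relpos (v + 1) y ∧ H.Adj u w := by
  by_cases hadj : H.Adj v (v + 1)
  · exact ⟨v, v + 1, le_refl _, by rw [relpos_self]; exact Nat.zero_le _, hadj⟩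
  · unfold CandidateGap at h
    push_neg at h
    exact h hadj h1 h2

lemma walk_lt {d : ℕ} (hd : d < n) :
    ∀ (m t : ℕ), (∀ j ≤ m, (t + j) % n ≠ 0 ∧ (t + j) % n ≠ d) → t % n < d → (t + m) % n < d := by
  intro m
  induction m with
  | zero => intro t _ ht; simpa using ht
  | succ m ih =>
    intro t h ht
    have hm := ih t (fun j hj => h j (by omega)) ht
    have hdm := (h (m + 1) le_rfl).2
    have e1 : (t + (m + 1)) % n = ((t + m) % n + 1) % n := by
      rw [Nat.mod_add_mod, ← Nat.add_assoc]
    have e2 : ((t + m) % n + 1) % n = (t + m) % n + 1 := Nat.mod_eq_of_lt (by omega)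
    omega

lemma walk_gt {d : ℕ} (hd : d < n) :
    ∀ (m t : ℕ), (∀ j ≤ m, (t + j) % n ≠ 0 ∧ (t + j) % n ≠ d) → d < t % n → d < (t + m) % n := by
  intro m
  induction m with
  | zero => intro t _ ht; simpa using ht
  | succ m ih =>
    intro t h ht
    have hm := ih t (fun j hj => h j (by omega)) ht
    have h0 := (h (m + 1) le_rfl).1
    have hdm := (h (m + 1) le_rfl).2
    have hlt : (t + m) % n < n := Nat.mod_lt _ (Nat.pos_of_ne_zero (NeZero.ne n))
    have e1 : (t + (m + 1)) % n = ((t + m) % n + 1) % n := by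
      rw [Nat.mod_add_mod, ← Nat.add_assoc]
    by_cases he : (t + m) % n + 1 = n
    · exfalso
      apply h0
      rw [e1, he, Nat.mod_self]
    · have e2 : ((t + m) % n + 1) % n = (t + m) % n + 1 := Nat.mod_eq_of_lt (by omega)
      omega

end helpers

lemma main_gap {n : ℕ} [NeZero n] (H : SimpleGraph (ZMod n))
    (hcnp : ∀ v : ZMod n, CNP H v) :
    ∀ x y : ZMod n, x ≠ y → ¬ H.Adj x y →
      ∃ v, CandidateGap H x y v ∨ CandidateGap H y x v := by
  intro x y hxy hnadj
  by_contra hcon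
  push_neg at hcon
  -- n ≥ 2
  have h2 : 1 < n := by
    by_contra h
    have h1 : n = 1 := by have := (inferInstance : NeZero n).out; omega
    apply hxy
    haveI : Subsingleton (ZMod n) := by rw [h1]; infer_instance
    exact Subsingleton.elim x y
  set d := relpos x y with hd
  have hd1 : 1 ≤ d := relpos_pos (Ne.symm hxy)
  have hdn : d < n := relpos_lt x y
  -- Neighbor of x strictly inside arc (x, y)
  obtain ⟨u0, w1, hu0, hw1, hadj1⟩ :=
    cross_of_not_gap H (hcon x).1
      (by rw [relpos_self, relpos_add_one h2]; omega)
      (by rw [relpos_add_one h2]; omega)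
  rw [relpos_self] at hu0
  have hu0x : u0 = x := relpos_eq_zero_iff.mp (Nat.le_zero.mp hu0)
  rw [hu0x] at hadj1
  have hw1x : w1 ≠ x := hadj1.ne'
  have hw1y : w1 ≠ y := fun h => hnadj (h ▸ hadj1)
  set p1 := relpos x w1 with hp1
  have hp1a : 1 ≤ p1 := relpos_pos hw1x
  have hp1d : p1 ≠ d := fun h => hw1y (relpos_right_inj h)
  have hw1' : relpos (x + 1) w1 = p1 - 1 := relpos_base_succ hw1x
  have hy' : relpos (x + 1) y = d - 1 := relpos_base_succ (Ne.symm hxy)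
  rw [hw1', hy'] at hw1
  have hp1lt : p1 < d := by omega
  -- Neighbor of x strictly inside arc (y, x)
  have hvx : (x - 1) + 1 = x := by ring
  have hyx : relpos y x = n - d := relpos_symm hxy
  have hyx1 : relpos y (x - 1) = relpos y x - 1 := relpos_sub_one hxy
  obtain ⟨u2, w0, hu2, hw0, hadj2⟩ :=
    cross_of_not_gap H (hcon (x - 1)).2
      (by rw [hvx, hyx1]; have : 1 ≤ relpos y x := relpos_pos hxy; omega)
      (by rw [hvx])
  rw [hvx, relpos_self] at hw0
  have hw0x : w0 = x := relpos_eq_zero_iff.mp (Nat.le_zero.mp hw0)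
  rw [hw0x] at hadj2
  have hadj2' : H.Adj x u2 := hadj2.symm
  have hu2x : u2 ≠ x := hadj2'.ne'
  have hu2y : u2 ≠ y := fun h => hnadj ((h ▸ hadj2' : H.Adj x y))
  rw [hyx1, hyx] at hu2
  have hu2q : 1 ≤ relpos y u2 := relpos_pos hu2y
  set p2 := relpos x u2 with hp2
  have hp2eq : p2 = d + relpos y u2 := by
    rw [hp2, relpos_trans x y u2, ← hd]
    exact Nat.mod_eq_of_lt (by omega)
  have hp2gt : d < p2 := by omega
  -- CNP of x yields a contradiction
  obtain ⟨a, k, hk⟩ := hcnp x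
  obtain ⟨i1, hi1, he1⟩ := (hk w1).mp hadj1
  obtain ⟨i2, hi2, he2⟩ := (hk u2).mp hadj2'
  set s := relpos x a with hs
  have key : ∀ i, i < k → (s + i) % n ≠ 0 ∧ (s + i) % n ≠ d := by
    intro i hi
    have hadji : H.Adj x (a + (i : ZMod n)) := (hk _).mpr ⟨i, hi, rfl⟩
    have hnex : a + (i : ZMod n) ≠ x := hadji.ne'
    have hney : a + (i : ZMod n) ≠ y := fun h => hnadj ((h ▸ hadji : H.Adj x y))
    have hrel : relpos x (a + (i : ZMod n)) = (s + i) % n := relpos_add_nat x a i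
    constructor
    · intro h
      exact hnex (relpos_eq_zero_iff.mp (by rw [hrel, h]))
    · intro h
      exact hney (relpos_right_inj (by rw [hrel, h, hd]))
  have hg1 : (s + i1) % n = p1 := by rw [← relpos_add_nat x a i1, ← he1]
  have hg2 : (s + i2) % n = p2 := by rw [← relpos_add_nat x a i2, ← he2]
  rcases lt_trichotomy i1 i2 with hlt | heq | hgt
  · have := walk_lt hdn (i2 - i1) (s + i1)
      (fun j hj => by
        have h := key (i1 + j) (by omega)
        rwa [← Nat.add_assoc] at h)
      (by rw [hg1]; omega)
    rw [show s + i1 + (i2 - i1) = s + i2 by omega, hg2] at this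
    omega
  · subst heq
    rw [hg1] at hg2
    omega
  · have := walk_gt hdn (i1 - i2) (s + i2)
      (fun j hj => by
        have h := key (i2 + j) (by omega)
        rwa [← Nat.add_assoc] at h)
      (by rw [hg2]; omega)
    rw [show s + i2 + (i1 - i2) = s + i1 by omega, hg1] at this
    omega

/-- If a graph admits a circular vertex order in which every vertex has the
consecutive-neighbors property, then every non-edge has a candidate gap
with respect to that order. -/
theorem stmt_1 {V : Type*} [Fintype V] (G : SimpleGraph V)
    (σ : V ≃ ZMod (Fintype.card V))
    (hcnp : ∀ v : ZMod (Fintype.card V), CNP (G.map σ.toEmbedding) v) :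
    ∀ x y : ZMod (Fintype.card V), x ≠ y → ¬ (G.map σ.toEmbedding).Adj x y →
      ∃ v, CandidateGap (G.map σ.toEmbedding) x y v ∨
        CandidateGap (G.map σ.toEmbedding) y x v := by
  haveI hne0 : NeZero (Fintype.card V) := by
    constructor
    intro h
    have hft : Fintype (ZMod (Fintype.card V)) := Fintype.ofEquiv V σ
    rw [h] at hft
    exact absurd (@Finite.of_fintype (ZMod 0) hft) (by
      simp only [not_finite_iff_infinite]
      exact (inferInstance : Infinite ℤ))
  exact main_gap (G.map σ.toEmbedding) hcnp
end

section
/- The wheel graph W_6 (a 5-cycle plus a universal hub vertex, 6 vertices total) admits no circular vertex order satisfying the gap condition: for every cyclic order of its 6 vertices there exists a non-edge {x,y} for which no candidate gap exists. -/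
open SimpleGraph

/-- The wheel `W₆`: a 5-cycle `0,1,2,3,4` plus a universal hub `5`. -/
def wheelW6 : SimpleGraph (Fin 6) :=
  SimpleGraph.fromEdgeSet {s(0,1), s(1,2), s(2,3), s(3,4), s(4,0),
    s(5,0), s(5,1), s(5,2), s(5,3), s(5,4)}

/-!
Rotating the cyclic order preserves the gap condition, so we may put the hub at position `0`;
the remaining `5!` orders of the rim are then ruled out by evaluation.

Conceptually: since the hub is adjacent to every vertex, the arc of a candidate gap never
contains it, so each non-edge must be cut inside the hub-free arc. There the common neighbour
of its ends, and one of the two inner vertices of the other rim path between them, must lie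
outside its span; hence every non-edge spans at most three positions. This pins down the order
of the rim up to symmetry, and in that order some non-edge spans the common neighbour of its
ends.
-/

theorem wheelW6_adj (a b : Fin 6) :
    wheelW6.Adj a b ↔
      a ≠ b ∧ (a = 5 ∨ b = 5 ∨ (a.val + 1) % 5 = b.val ∨ (b.val + 1) % 5 = a.val) := by
  simp only [wheelW6, fromEdgeSet_adj, Set.mem_insert_iff, Set.mem_singleton_iff, Sym2.eq_iff]
  revert a b
  decide

instance : DecidableRel wheelW6.Adj := fun a b => decidable_of_iff' _ (wheelW6_adj a b)

theorem relpos_add_right {n : ℕ} (x v c : ZMod n) : relpos (x + c) (v + c) = relpos x v := by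
  simp only [relpos, add_sub_add_right_eq_sub]

section Rotation

variable {n : ℕ} (G : SimpleGraph (ZMod n)) (c : ZMod n)

theorem CandidateGap.comap_addRight {x y v : ZMod n}
    (h : CandidateGap G (x + c) (y + c) (v + c)) :
    CandidateGap (G.comap (Equiv.addRight c)) x y v := by
  obtain ⟨hnadj, hlt, hle, hsep⟩ := h
  have hsucc : v + c + 1 = v + 1 + c := add_right_comm v c 1
  rw [hsucc, relpos_add_right, relpos_add_right] at hlt hle
  rw [hsucc] at hnadj hsep
  refine ⟨hnadj, hlt, hle, fun u w hu hw => hsep (u + c) (w + c) ?_ ?_⟩ <;>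
    simpa only [relpos_add_right]

theorem GapCondition.comap_addRight (h : GapCondition G) :
    GapCondition (G.comap (Equiv.addRight c)) := by
  intro x y hne hnadj
  obtain ⟨v, hv⟩ := h (x + c) (y + c) (fun hxy => hne (add_right_cancel hxy)) hnadj
  refine ⟨v - c, ?_⟩
  rw [← sub_add_cancel v c] at hv
  exact hv.imp (CandidateGap.comap_addRight G c) (CandidateGap.comap_addRight G c)

end Rotation

theorem not_gapCondition_wheelW6_comap_of_hub_at_zero (τ : ZMod 6 ≃ Fin 6) (hτ : τ 0 = 5) :
    ¬ GapCondition (wheelW6.comap τ) := by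
  revert τ
  unfold GapCondition CandidateGap
  decide +kernel

/-- No circular order of the vertices of `W₆` satisfies the gap condition. -/
theorem stmt_2 : ∀ σ : Fin 6 ≃ ZMod 6, ¬ GapCondition (wheelW6.map σ.toEmbedding) := by
  intro σ hgap
  rw [← comap_symm] at hgap
  exact not_gapCondition_wheelW6_comap_of_hub_at_zero ((Equiv.addRight (σ 5)).trans σ.symm)
    (by simp) (hgap.comap_addRight _ (σ 5))
end

section
/- Let n >= 3 and let G = K_n minus the edges of a simple 3-cycle. Then there exists a cyclic order of the vertices of G in which every vertex has the consecutive-neighbors property. -/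
open SimpleGraph

/-- For `n ≥ 3` and `G = Kₙ` minus a triangle, there is a cyclic order of the
vertices of `G` in which every vertex has the consecutive-neighbors property. -/
theorem stmt_7 {V : Type*} [Fintype V] (n : ℕ)
    (hcard : Fintype.card V = n) (hn : 3 ≤ n)
    (c : Fin 3 ↪ V) (G : SimpleGraph V)
    (hG : G = (⊤ : SimpleGraph V) \
      SimpleGraph.fromEdgeSet {s(c 0, c 1), s(c 1, c 2), s(c 2, c 0)}) :
    ∃ σ : V ≃ ZMod n, ∀ v : ZMod n, CNP (G.map σ.toEmbedding) v := by
  classical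
  haveI : NeZero n := ⟨by omega⟩
  -- build the equivalence sending `c i` to position `i`
  have hdinj : Function.Injective (fun i : Fin 3 => ((i : ℕ) : ZMod n)) := by
    intro i j h
    have h' : ((i:ℕ) : ZMod n) = ((j:ℕ) : ZMod n) := h
    have := congrArg ZMod.val h'
    rw [ZMod.val_cast_of_lt (by omega), ZMod.val_cast_of_lt (by omega)] at this
    exact Fin.ext this
  set d : Fin 3 ↪ ZMod n := ⟨fun i => ((i:ℕ) : ZMod n), hdinj⟩ with hd
  have hcc : Fintype.card ((Set.range ⇑c)ᶜ : Set V)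
      = Fintype.card ((Set.range ⇑d)ᶜ : Set (ZMod n)) := by
    rw [Fintype.card_compl_set, Fintype.card_compl_set,
      Set.card_range_of_injective c.injective, Set.card_range_of_injective d.injective,
      hcard, ZMod.card]
  set e := Fintype.equivOfCardEq hcc with he
  refine ⟨((Equiv.Set.sumCompl (Set.range ⇑c)).symm.trans
    (Equiv.sumCongr (c.toEquivRange.symm.trans d.toEquivRange) e)).trans
    (Equiv.Set.sumCompl (Set.range ⇑d)), ?_⟩
  set σ : V ≃ ZMod n := ((Equiv.Set.sumCompl (Set.range ⇑c)).symm.trans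
    (Equiv.sumCongr (c.toEquivRange.symm.trans d.toEquivRange) e)).trans
    (Equiv.Set.sumCompl (Set.range ⇑d)) with hσdef
  have hσ : ∀ i : Fin 3, σ (c i) = ((i : ℕ) : ZMod n) := by
    intro i
    have h1 : (Equiv.Set.sumCompl (Set.range ⇑c)).symm (c i)
        = Sum.inl (c.toEquivRange i) :=
      Equiv.Set.sumCompl_symm_apply_of_mem (Set.mem_range_self i)
    simp only [hσdef, Equiv.trans_apply, h1, Equiv.sumCongr_apply, Sum.map_inl,
      Function.comp_apply, Equiv.symm_apply_apply, Function.Embedding.toEquivRange_apply,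
      Equiv.Set.sumCompl_apply_inl]
    rw [Function.Embedding.toEquivRange_symm_apply_self]
    rfl
  -- basic facts
  have hvalne : ∀ a b : ZMod n, a ≠ b → a.val ≠ b.val := by
    intro a b h hv
    exact h (by rw [← ZMod.natCast_zmod_val a, hv, ZMod.natCast_zmod_val])
  have hc : ∀ (j : Fin 3) (a : ZMod n), σ.symm a = c j ↔ a.val = (j : ℕ) := by
    intro j a
    rw [Equiv.symm_apply_eq, hσ]
    constructor
    · rintro rfl; exact ZMod.val_cast_of_lt (by omega)
    · intro h; rw [← h, ZMod.natCast_zmod_val]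
  have key : ∀ a b : ZMod n,
      (s(σ.symm a, σ.symm b) ∈ ({s(c 0, c 1), s(c 1, c 2), s(c 2, c 0)} : Set (Sym2 V))) ↔
      ((a.val = 0 ∧ b.val = 1) ∨ (a.val = 1 ∧ b.val = 0) ∨ (a.val = 1 ∧ b.val = 2) ∨
       (a.val = 2 ∧ b.val = 1) ∨ (a.val = 2 ∧ b.val = 0) ∨ (a.val = 0 ∧ b.val = 2)) := by
    intro a b
    simp only [Set.mem_insert_iff, Set.mem_singleton_iff, Sym2.eq_iff, hc]
    norm_num
    tauto
  have hmap : ∀ a b : ZMod n,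
      (G.map σ.toEmbedding).Adj a b ↔ G.Adj (σ.symm a) (σ.symm b) := by
    intro a b
    rw [SimpleGraph.map_adj]
    constructor
    · rintro ⟨u, v, h, rfl, rfl⟩; simpa using h
    · intro h; exact ⟨_, _, h, σ.apply_symm_apply a, σ.apply_symm_apply b⟩
  have hadj : ∀ a b : ZMod n,
      (G.map σ.toEmbedding).Adj a b ↔ (a ≠ b ∧ (3 ≤ a.val ∨ 3 ≤ b.val)) := by
    intro a b
    rw [hmap, hG]
    simp only [sdiff_adj, top_adj, fromEdgeSet_adj, not_and]
    constructor
    · rintro ⟨h1, h2⟩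
      have hab : a ≠ b := fun h => h1 (by rw [h])
      refine ⟨hab, ?_⟩
      by_contra hcon
      push_neg at hcon
      obtain ⟨ha3, hb3⟩ := hcon
      have hne := hvalne a b hab
      have hmem := (key a b).2 (by omega)
      exact (h2 hmem) h1
    · rintro ⟨hab, h3⟩
      have h1 : σ.symm a ≠ σ.symm b := fun h => hab (σ.symm.injective h)
      refine ⟨h1, fun hmem _ => ?_⟩
      have := (key a b).1 hmem
      omega
  -- verify CNP for every vertex
  intro v
  by_cases hv : v.val < 3
  · refine ⟨((3 : ℕ) : ZMod n), n - 3, ?_⟩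
    intro w
    rw [hadj]
    constructor
    · rintro ⟨hne, h3⟩
      have hw3 : 3 ≤ w.val := by rcases h3 with h | h <;> omega
      refine ⟨w.val - 3, by have := w.val_lt; omega, ?_⟩
      rw [← Nat.cast_add, show 3 + (w.val - 3) = w.val from by omega, ZMod.natCast_zmod_val]
    · rintro ⟨i, hi, rfl⟩
      have hcast : ((3:ℕ) : ZMod n) + (i : ZMod n) = ((3 + i : ℕ) : ZMod n) := by push_cast; ring
      have hv2 : (((3:ℕ) : ZMod n) + (i : ZMod n)).val = 3 + i := by
        rw [hcast, ZMod.val_cast_of_lt (by omega)]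
      refine ⟨?_, Or.inr (by omega)⟩
      intro heq
      have : v.val = 3 + i := by rw [heq, hv2]
      omega
  · refine ⟨v + 1, n - 1, ?_⟩
    intro w
    rw [hadj]
    constructor
    · rintro ⟨hne, -⟩
      have hne' : w - v ≠ 0 := sub_ne_zero.mpr (Ne.symm hne)
      have hval0 : (w - v).val ≠ 0 := by rwa [Ne, ZMod.val_eq_zero]
      refine ⟨(w - v).val - 1, by have := (w - v).val_lt; omega, ?_⟩
      have h1 : ((1 + ((w - v).val - 1) : ℕ) : ZMod n) = w - v := by
        rw [show 1 + ((w - v).val - 1) = (w - v).val from by omega, ZMod.natCast_zmod_val]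
      have h2 : v + 1 + ((((w - v).val - 1 : ℕ)) : ZMod n)
          = v + ((1 + ((w - v).val - 1) : ℕ) : ZMod n) := by push_cast; ring
      rw [h2, h1]; ring
    · rintro ⟨i, hi, rfl⟩
      have hval : (v + 1 + (i : ZMod n)) - v = ((1 + i : ℕ) : ZMod n) := by push_cast; ring
      have hne : (v + 1 + (i : ZMod n)) ≠ v := by
        intro h
        have h0 : ((1 + i : ℕ) : ZMod n) = 0 := by rw [← hval, h, sub_self]
        have := congrArg ZMod.val h0
        rw [ZMod.val_cast_of_lt (by omega), ZMod.val_zero] at this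
        omega
      exact ⟨fun h => hne h.symm, Or.inl (by omega)⟩
end

section
/- Let n >= 4 and let G = K_n minus the edges of a simple 4-cycle v_1 v_2 v_3 v_4. Then there exists a cyclic order of the vertices of G such that every vertex except possibly v_2 and v_4 has the consecutive-neighbors property, v_2 and v_4 are adjacent in G, and every non-edge of G is incident to a vertex with the consecutive-neighbors property. -/
/-!
Place `v 0, v 1, v 3, v 2` at the consecutive positions `0, 1, 2, 3` of `ZMod n` and the other
vertices anywhere. A vertex whose closed non-neighbourhood is an arc has the consecutive-neighbours
property, its neighbourhood being the complementary arc. In `Kₙ` minus the 4-cycle the closed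
non-neighbourhoods are `{v 0, v 1, v 3}`, `{v 1, v 3, v 2}` and `{u}` for every other vertex `u`:
all arcs. A non-edge is an edge of the 4-cycle, so it has an endpoint in `{v 0, v 2}`.
-/

open SimpleGraph

namespace ZMod

variable {n : ℕ}

lemma natCast_comp_injective {ι : Type*} {f : ι → ℕ} (hf : f.Injective) (hlt : ∀ i, f i < n) :
    (fun i => (f i : ZMod n)).Injective := fun i j h =>
  hf (by simpa only [val_natCast_of_lt (hlt _)] using congrArg val h)

variable [NeZero n]

lemma exists_lt_eq_add_iff_val_sub_lt {a w : ZMod n} {k : ℕ} (hk : k ≤ n) :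
    (∃ i < k, w = a + i) ↔ (w - a).val < k := by
  constructor
  · rintro ⟨i, hi, rfl⟩
    rwa [add_sub_cancel_left, val_cast_of_lt (hi.trans_le hk)]
  · intro h
    exact ⟨(w - a).val, h, by rw [natCast_zmod_val, add_sub_cancel]⟩

lemma val_sub_lt_iff_not_val_sub_add_lt {a w : ZMod n} {k : ℕ} (hk : k ≤ n) :
    (w - a).val < k ↔ ¬ (w - (a + k)).val < n - k := by
  obtain ⟨t, ht, hwa⟩ : ∃ t < n, w - a = t := ⟨(w - a).val, val_lt _, (natCast_zmod_val _).symm⟩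
  have hshift : w - (a + k) = ((t + (n - k) : ℕ) : ZMod n) := by
    push_cast [Nat.cast_sub hk, natCast_self]
    linear_combination hwa
  rw [hwa, val_cast_of_lt ht, hshift]
  by_cases htk : t < k
  · rw [val_cast_of_lt (by omega : t + (n - k) < n)]
    omega
  · have hwrap : ((t + (n - k) : ℕ) : ZMod n) = ((t - k : ℕ) : ZMod n) := by
      rw [show t + (n - k) = (t - k) + n by omega, Nat.cast_add, natCast_self, add_zero]
    rw [hwrap, val_cast_of_lt (by omega : t - k < n)]
    omega

/-- The arcs `[a, a + k)` and `[a + k, a + n)` partition `ZMod n`. -/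
lemma exists_lt_sub_eq_add_add_iff {a w : ZMod n} {k : ℕ} (hk : k ≤ n) :
    (∃ i < n - k, w = a + k + i) ↔ ¬ ∃ i < k, w = a + i := by
  rw [exists_lt_eq_add_iff_val_sub_lt hk, exists_lt_eq_add_iff_val_sub_lt (Nat.sub_le n k),
    val_sub_lt_iff_not_val_sub_add_lt hk, not_not]

end ZMod

section CNP

variable {n : ℕ} [NeZero n]

lemma cnp_of_not_adj_iff {G : SimpleGraph (ZMod n)} {p a : ZMod n} {k : ℕ} (hk : k ≤ n)
    (h : ∀ w, ¬ G.Adj p w ↔ ∃ i < k, w = a + i) : CNP G p :=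
  ⟨a + k, n - k, fun w => by rw [ZMod.exists_lt_sub_eq_add_add_iff hk, ← h, not_not]⟩

lemma cnp_map_of_not_adj_iff {V : Type*} {G : SimpleGraph V} (σ : V ≃ ZMod n) {u : V}
    {a : ZMod n} {k : ℕ} (hk : k ≤ n) (h : ∀ x, ¬ G.Adj u x ↔ ∃ i < k, σ x = a + i) :
    CNP (G.map σ.toEmbedding) (σ u) :=
  cnp_of_not_adj_iff hk fun w => by
    obtain ⟨x, rfl⟩ := σ.surjective w
    rw [← Equiv.coe_toEmbedding, map_adj_apply]
    exact h x

end CNP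

lemma Function.Embedding.exists_equiv_apply_eq {ι α β : Type*} [Fintype α] [Fintype β]
    (f : ι ↪ α) (g : ι ↪ β) (hcard : Fintype.card α = Fintype.card β) :
    ∃ σ : α ≃ β, ∀ i, σ (f i) = g i := by
  classical
  cases isEmpty_or_nonempty ι with
  | inl _ => exact ⟨Fintype.equivOfCardEq hcard, isEmptyElim⟩
  | inr hι =>
    obtain ⟨i₀⟩ := hι
    have hext : ∀ i, Function.extend f g (fun _ => g i₀) (f i) = g i :=
      f.injective.extend_apply _ _
    obtain ⟨σ, hσ⟩ := Set.MapsTo.exists_equiv_extend_of_card_eq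
      (t := Finset.univ) (s := Set.range f) (f := Function.extend f g fun _ => g i₀)
      (by rw [hcard, Finset.card_univ]) (fun _ _ => Finset.mem_coe.2 (Finset.mem_univ _))
      (by rintro _ ⟨i, rfl⟩ _ ⟨j, rfl⟩ h; rw [hext, hext] at h; rw [g.injective h])
    exact ⟨σ.trans (Equiv.subtypeUnivEquiv Finset.mem_univ),
      fun i => (hσ _ ⟨i, rfl⟩).trans (hext i)⟩

section FourCycle

variable {V : Type*} (v : Fin 4 ↪ V) {x y : V}

def completeMinusFourCycle : SimpleGraph V :=
  (⊤ : SimpleGraph V).deleteEdges {s(v 0, v 1), s(v 1, v 2), s(v 2, v 3), s(v 3, v 0)}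

namespace completeMinusFourCycle

lemma not_adj_zero_iff :
    ¬ (completeMinusFourCycle v).Adj (v 0) x ↔ x = v 0 ∨ x = v 1 ∨ x = v 3 := by
  simp [completeMinusFourCycle, v.injective.eq_iff]
  tauto

lemma not_adj_two_iff :
    ¬ (completeMinusFourCycle v).Adj (v 2) x ↔ x = v 1 ∨ x = v 2 ∨ x = v 3 := by
  simp [completeMinusFourCycle, v.injective.eq_iff]
  tauto

lemma not_adj_iff_eq_of_forall_ne {u : V} (hu : ∀ i, u ≠ v i) :
    ¬ (completeMinusFourCycle v).Adj u x ↔ u = x := by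
  simp [completeMinusFourCycle, hu]

lemma adj_one_three : (completeMinusFourCycle v).Adj (v 1) (v 3) := by
  simp [completeMinusFourCycle, v.injective.eq_iff]

lemma exists_eq_zero_or_eq_two_of_not_adj (hxy : x ≠ y)
    (h : ¬ (completeMinusFourCycle v).Adj x y) :
    ∃ p, (p = x ∨ p = y) ∧ (p = v 0 ∨ p = v 2) := by
  by_contra! hp
  simp [completeMinusFourCycle, hxy, hp x (.inl rfl), hp y (.inr rfl)] at h

variable {v} in
lemma cnp_map {n : ℕ} [NeZero n] (hn : 4 ≤ n) {σ : V ≃ ZMod n}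
    (hσ0 : σ (v 0) = 0) (hσ1 : σ (v 1) = 1) (hσ3 : σ (v 3) = 2) (hσ2 : σ (v 2) = 3)
    {u : V} (hu1 : u ≠ v 1) (hu3 : u ≠ v 3) :
    CNP ((completeMinusFourCycle v).map σ.toEmbedding) (σ u) := by
  have hpos : ∀ {i : Fin 4} {a : ZMod n}, σ (v i) = a → ∀ x, x = v i ↔ σ x = a :=
    fun h x => by rw [← h, σ.apply_eq_iff_eq]
  by_cases hu0 : u = v 0
  · subst hu0
    refine cnp_map_of_not_adj_iff σ (a := 0) (k := 3) (by omega) fun x => ?_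
    rw [not_adj_zero_iff, hpos hσ0, hpos hσ1, hpos hσ3]
    simp only [Nat.exists_lt_succ_right, Nat.not_lt_zero, false_and, exists_false, false_or]
    norm_num
    tauto
  by_cases hu2 : u = v 2
  · subst hu2
    refine cnp_map_of_not_adj_iff σ (a := 1) (k := 3) (by omega) fun x => ?_
    rw [not_adj_two_iff, hpos hσ1, hpos hσ2, hpos hσ3]
    simp only [Nat.exists_lt_succ_right, Nat.not_lt_zero, false_and, exists_false, false_or]
    norm_num
    tauto
  · refine cnp_map_of_not_adj_iff σ (a := σ u) (k := 1) (by omega) fun x => ?_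
    rw [not_adj_iff_eq_of_forall_ne v fun i => by fin_cases i <;> assumption]
    simp [eq_comm]

end completeMinusFourCycle

end FourCycle

/-- For `n ≥ 4` and `G = Kₙ` minus a 4-cycle `v₁v₂v₃v₄`, there is a cyclic order such
that every vertex except possibly `v₂, v₄` has the consecutive-neighbors property,
`v₂` and `v₄` are adjacent in `G`, and every non-edge of `G` is incident to a vertex
with the consecutive-neighbors property. -/
theorem stmt_8 {V : Type*} [Fintype V] (n : ℕ)
    (hcard : Fintype.card V = n) (hn : 4 ≤ n)
    (v : Fin 4 ↪ V) (G : SimpleGraph V)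
    (hG : G = (⊤ : SimpleGraph V) \
      SimpleGraph.fromEdgeSet {s(v 0, v 1), s(v 1, v 2), s(v 2, v 3), s(v 3, v 0)}) :
    ∃ σ : V ≃ ZMod n,
      (∀ u : V, u ≠ v 1 → u ≠ v 3 → CNP (G.map σ.toEmbedding) (σ u)) ∧
      G.Adj (v 1) (v 3) ∧
      (∀ x y : V, x ≠ y → ¬ G.Adj x y →
        ∃ p, (p = x ∨ p = y) ∧ CNP (G.map σ.toEmbedding) (σ p)) := by
  have : NeZero n := ⟨by omega⟩
  change G = completeMinusFourCycle v at hG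
  subst hG
  let pos : Fin 4 ↪ ZMod n := ⟨fun i => ((![0, 1, 3, 2] i : ℕ) : ZMod n),
    ZMod.natCast_comp_injective (by decide) fun i => by fin_cases i <;> simp <;> omega⟩
  obtain ⟨σ, hσ⟩ := v.exists_equiv_apply_eq pos (by rw [hcard, ZMod.card])
  have hcnp : ∀ u, u ≠ v 1 → u ≠ v 3 →
      CNP ((completeMinusFourCycle v).map σ.toEmbedding) (σ u) :=
    fun u => completeMinusFourCycle.cnp_map hn (by simpa [pos] using hσ 0)
      (by simpa [pos] using hσ 1) (by simpa [pos] using hσ 3) (by simpa [pos] using hσ 2)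
  refine ⟨σ, hcnp, completeMinusFourCycle.adj_one_three v, fun x y hxy hxy' => ?_⟩
  obtain ⟨p, hp, rfl | rfl⟩ :=
    completeMinusFourCycle.exists_eq_zero_or_eq_two_of_not_adj v hxy hxy'
  all_goals exact ⟨_, hp, hcnp _ (v.injective.ne (by decide)) (v.injective.ne (by decide))⟩
end
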